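/- arXiv:1307.4258 — 5 statements merged into one kernel-verified Lean document; each statement's English description precedes it below -/
import Mathlib

section
/- For all γ, μ ∈ (0,1], the maximum over p ∈ (0,1) of min{ 1 + γ(1−p), (√p + √(μ(1−p)))² } equals (γ + μ + 1)² / ((γ + μ + 1)² − 4μγ), and this value is strictly smaller than 1 + μ. -/
/-!
Let `c = γ - μ + 1` and `D = c² + 4μ`. At `p* = c² / D` both branches equal `V = (γ + μ + 1)² / D`.
For `p ≥ p*` the decreasing linear branch is at most `V`. For `p ≤ p*`, Cauchy–Schwarz with
weights `c` and `2μ` (tight at `p*`) bounds the square-root branch by the nondecreasing affine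
function `(γ + μ + 1) (p / c + (1 - p) / 2)`, whose value at `p*` is again `V`.
Finally `V < 1 + μ` reduces to `(γ - μ - 1)² > 0`.
-/

open Set

theorem sq_add_div_add_le {u v s t : ℝ} (hs : 0 < s) (ht : 0 < t) :
    (u + v) ^ 2 / (s + t) ≤ u ^ 2 / s + v ^ 2 / t := by
  simpa [Fin.sum_univ_two] using
    Finset.sq_sum_div_le_sum_sq_div Finset.univ ![u, v] (g := ![s, t])
      (by simp [Fin.forall_fin_two, hs, ht])

noncomputable def crossingPoint (γ μ : ℝ) : ℝ :=
  (γ - μ + 1) ^ 2 / ((γ + μ + 1) ^ 2 - 4 * μ * γ)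

noncomputable def crossingValue (γ μ : ℝ) : ℝ :=
  (γ + μ + 1) ^ 2 / ((γ + μ + 1) ^ 2 - 4 * μ * γ)

section Crossing

variable {γ μ p : ℝ}

theorem crossing_denom_eq (γ μ : ℝ) :
    (γ + μ + 1) ^ 2 - 4 * μ * γ = (γ - μ + 1) ^ 2 + 4 * μ := by
  ring

theorem crossing_denom_pos (hμ : 0 < μ) : 0 < (γ + μ + 1) ^ 2 - 4 * μ * γ := by
  rw [crossing_denom_eq]
  positivity

theorem one_sub_crossingPoint (hμ : 0 < μ) :
    1 - crossingPoint γ μ = 4 * μ / ((γ + μ + 1) ^ 2 - 4 * μ * γ) := by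
  rw [crossingPoint, eq_div_iff (crossing_denom_pos hμ).ne', sub_mul,
    div_mul_cancel₀ _ (crossing_denom_pos hμ).ne']
  ring

theorem crossingPoint_mem_Ioo (hμ : 0 < μ) (hc : 0 < γ - μ + 1) :
    crossingPoint γ μ ∈ Ioo 0 1 := by
  refine ⟨div_pos (by positivity) (crossing_denom_pos hμ), ?_⟩
  rw [← sub_pos, one_sub_crossingPoint hμ]
  exact div_pos (by positivity) (crossing_denom_pos hμ)

theorem one_add_mul_one_sub_crossingPoint (hμ : 0 < μ) :
    1 + γ * (1 - crossingPoint γ μ) = crossingValue γ μ := by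
  rw [one_sub_crossingPoint hμ, mul_div_assoc', one_add_div (crossing_denom_pos hμ).ne',
    crossingValue]
  ring_nf

theorem sqrt_add_sqrt_sq_crossingPoint (hμ : 0 < μ) (hc : 0 < γ - μ + 1) :
    (Real.sqrt (crossingPoint γ μ) + Real.sqrt (μ * (1 - crossingPoint γ μ))) ^ 2 =
      crossingValue γ μ := by
  have hD := crossing_denom_pos (γ := γ) hμ
  have h₁ : Real.sqrt (crossingPoint γ μ) =
      (γ - μ + 1) / Real.sqrt ((γ + μ + 1) ^ 2 - 4 * μ * γ) := by
    rw [crossingPoint, Real.sqrt_div' _ hD.le, Real.sqrt_sq hc.le]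
  have h₂ : Real.sqrt (μ * (1 - crossingPoint γ μ)) =
      2 * μ / Real.sqrt ((γ + μ + 1) ^ 2 - 4 * μ * γ) := by
    rw [one_sub_crossingPoint hμ, ← mul_div_assoc, ← Real.sqrt_sq (by positivity : 0 ≤ 2 * μ),
      ← Real.sqrt_div' _ hD.le]
    ring_nf
  rw [h₁, h₂, ← add_div, div_pow, Real.sq_sqrt hD.le, crossingValue]
  ring_nf

theorem linear_le_crossingValue (hμ : 0 < μ) (hγ : 0 ≤ γ) (hp : crossingPoint γ μ ≤ p) :
    1 + γ * (1 - p) ≤ crossingValue γ μ := by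
  rw [← one_add_mul_one_sub_crossingPoint hμ]
  gcongr

theorem sqrt_add_sqrt_sq_le_crossingValue (hμ : 0 < μ) (hc : 0 < γ - μ + 1)
    (hγμ : γ ≤ μ + 1) (hp₀ : 0 ≤ p) (hp : p ≤ crossingPoint γ μ) :
    (Real.sqrt p + Real.sqrt (μ * (1 - p))) ^ 2 ≤ crossingValue γ μ := by
  have hp₁ : p < 1 := hp.trans_lt (crossingPoint_mem_Ioo hμ hc).2
  have affine_eq (q : ℝ) :
      q / (γ - μ + 1) + μ * (1 - q) / (2 * μ) = 1 / 2 + q * (1 / (γ - μ + 1) - 1 / 2) := by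
    field_simp
    ring
  have slope_nonneg : 0 ≤ 1 / (γ - μ + 1) - 1 / 2 := by
    rw [sub_nonneg]
    gcongr
    linarith
  calc (Real.sqrt p + Real.sqrt (μ * (1 - p))) ^ 2
      ≤ (p / (γ - μ + 1) + μ * (1 - p) / (2 * μ)) * (γ - μ + 1 + 2 * μ) := by
        have := sq_add_div_add_le (u := Real.sqrt p) (v := Real.sqrt (μ * (1 - p))) hc
          (by positivity : 0 < 2 * μ)
        rwa [Real.sq_sqrt hp₀, Real.sq_sqrt (mul_nonneg hμ.le (by linarith)), div_le_iff₀ (by linarith)] at this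
    _ ≤ (crossingPoint γ μ / (γ - μ + 1) + μ * (1 - crossingPoint γ μ) / (2 * μ)) *
          (γ - μ + 1 + 2 * μ) := by
        rw [affine_eq, affine_eq]
        gcongr
    _ = crossingValue γ μ := by
        have hD := (crossing_denom_pos (γ := γ) hμ).ne'
        rw [one_sub_crossingPoint hμ, crossingPoint, crossingValue]
        field_simp
        ring

theorem crossingValue_lt (hμ : 0 < μ) (hγμ : γ < μ + 1) : crossingValue γ μ < 1 + μ := by
  rw [crossingValue, div_lt_iff₀ (crossing_denom_pos hμ)]
  nlinarith [mul_pos hμ (pow_pos (sub_pos.2 hγμ) 2)]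

end Crossing

theorem best_of_two
    (γ μ : ℝ) (hγ : γ ∈ Ioc (0:ℝ) 1) (hμ : μ ∈ Ioc (0:ℝ) 1) :
    IsGreatest {v : ℝ | ∃ p ∈ Ioo (0:ℝ) 1,
        v = min (1 + γ * (1 - p))
                ((Real.sqrt p + Real.sqrt (μ * (1 - p))) ^ 2)}
      ((γ + μ + 1) ^ 2 / ((γ + μ + 1) ^ 2 - 4 * μ * γ)) ∧
    (γ + μ + 1) ^ 2 / ((γ + μ + 1) ^ 2 - 4 * μ * γ) < 1 + μ := by
  obtain ⟨hγ₀, hγ₁⟩ := hγ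
  obtain ⟨hμ₀, hμ₁⟩ := hμ
  have hc : 0 < γ - μ + 1 := by linarith
  refine ⟨⟨⟨crossingPoint γ μ, crossingPoint_mem_Ioo hμ₀ hc, ?_⟩, ?_⟩,
    crossingValue_lt hμ₀ (by linarith)⟩
  · rw [one_add_mul_one_sub_crossingPoint hμ₀, sqrt_add_sqrt_sq_crossingPoint hμ₀ hc, min_self,
      crossingValue]
  · rintro v ⟨p, ⟨hp₀, -⟩, rfl⟩
    rcases le_total p (crossingPoint γ μ) with hp | hp
    · exact (min_le_right _ _).trans
        (sqrt_add_sqrt_sq_le_crossingValue hμ₀ hc (by linarith) hp₀.le hp)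
    · exact (min_le_left _ _).trans (linear_le_crossingValue hμ₀ hγ₀.le hp)
end

section
/- The minimum of the function f(v, z) = 3·(v²/z + z − 2v) over v ≥ 1/2, z > 0 subject to the constraint 3·v/z ≥ 4 equals 1/8, attained at v = 1/2 and z = 3/8. -/
theorem quadratic_program_Q :
    IsLeast {c : ℝ | ∃ v z : ℝ, 1 / 2 ≤ v ∧ 0 < z ∧ 4 ≤ 3 * (v / z) ∧
        c = 3 * (v ^ 2 / z + z - 2 * v)} (1 / 8) ∧
    (3 : ℝ) * ((1/2 : ℝ) ^ 2 / (3/8) + 3/8 - 2 * (1/2)) = 1 / 8 := by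
  refine ⟨⟨⟨1/2, 3/8, by norm_num⟩, ?_⟩, by norm_num⟩
  rintro c ⟨v, z, hv, hz, hcon, rfl⟩
  have hzle : 4 * z ≤ 3 * v := by
    have h1 : (4:ℝ)/3 ≤ v / z := by linarith
    have h2 := (le_div_iff₀ hz).mp h1
    linarith
  have key : z / 8 ≤ 3 * (v ^ 2 + z ^ 2 - 2 * v * z) := by nlinarith [sq_nonneg (v - z), sq_nonneg v]
  have : 3 * (v ^ 2 / z + z - 2 * v) = 3 * (v ^ 2 + z ^ 2 - 2 * v * z) / z := by field_simp
  rw [this]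
  rw [le_div_iff₀ hz]
  nlinarith
end

section
/- For every m ≥ 0, the minimum of Σ_{i=1}^{3} (v_i²/z_i + z_i − 2v_i) over v_i ≥ m, z_i > 0 subject to Σ_{i=1}^{3} v_i/z_i ≥ 4 equals m/4, attained at v_i = m and z_i = 3m/4 for all i. -/
/-!
Weak duality with a Lagrange multiplier. Each term `v ^ 2 / z + z - 2 * v = (v - z) ^ 2 / z`
dominates `λ * (v / z) - 2 * a * m` with `λ = a * (2 - a) * m`, because after clearing `z` the
difference is the sum of squares `(z - v + a * m) ^ 2 + a ^ 2 * m * (v - m)`. Summing the three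
terms against the constraint with `a = 1 / 4` (so `λ = 7 * m / 16`, the multiplier of the
KKT conditions at the optimum) gives the lower bound `m / 4`, which is attained
at `v = m`, `z = 3 * m / 4` for `m > 0` and approached along `v = 4 * s / 3`, `z = s → 0` for `m = 0`.
-/

open Finset

lemma lagrangian_le_cost {m v z : ℝ} (a : ℝ) (hm : 0 ≤ m) (hv : m ≤ v) (hz : 0 < z) :
    a * (2 - a) * m * (v / z) - 2 * a * m ≤ v ^ 2 / z + z - 2 * v := by
  have key : v ^ 2 / z + z - 2 * v - (a * (2 - a) * m * (v / z) - 2 * a * m)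
      = ((z - v + a * m) ^ 2 + a ^ 2 * m * (v - m)) / z := by
    field_simp
    ring
  rw [← sub_nonneg, key]
  exact div_nonneg
    (add_nonneg (sq_nonneg _) (mul_nonneg (mul_nonneg (sq_nonneg a) hm) (sub_nonneg.2 hv))) hz.le

lemma lagrangian_le_sum_cost {ι : Type*} [Fintype ι] {m c a : ℝ} {v z : ι → ℝ}
    (hm : 0 ≤ m) (ha₀ : 0 ≤ a) (ha₂ : a ≤ 2) (hv : ∀ i, m ≤ v i) (hz : ∀ i, 0 < z i)
    (hc : c ≤ ∑ i, v i / z i) :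
    a * (2 - a) * m * c - 2 * a * m * Fintype.card ι ≤ ∑ i, (v i ^ 2 / z i + z i - 2 * v i) := by
  have hmult : 0 ≤ a * (2 - a) * m := mul_nonneg (mul_nonneg ha₀ (by linarith)) hm
  calc a * (2 - a) * m * c - 2 * a * m * Fintype.card ι
      ≤ a * (2 - a) * m * ∑ i, v i / z i - 2 * a * m * Fintype.card ι := by gcongr
    _ = ∑ i, (a * (2 - a) * m * (v i / z i) - 2 * a * m) := by
      rw [sum_sub_distrib, mul_sum, sum_const, card_univ, nsmul_eq_mul, mul_comm _ (2 * a * m)]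
    _ ≤ ∑ i, (v i ^ 2 / z i + z i - 2 * v i) :=
      sum_le_sum fun i _ => lagrangian_le_cost a hm (hv i) (hz i)

lemma uniform_point {v z : ℝ} (hz : z ≠ 0) (hvz : 3 * v = 4 * z) :
    ∑ _i : Fin 3, v / z = 4 ∧ ∑ _i : Fin 3, (v ^ 2 / z + z - 2 * v) = v / 4 := by
  simp only [sum_const, card_univ, Fintype.card_fin, nsmul_eq_mul, Nat.cast_ofNat]
  obtain rfl : v = 4 * z / 3 := by linarith
  constructor
  · field_simp
  · field_simp
    ring

theorem quadratic_program_Qk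
    (m : ℝ) (hm : 0 ≤ m) :
    IsGLB {c : ℝ | ∃ v z : Fin 3 → ℝ,
        (∀ i, m ≤ v i) ∧ (∀ i, 0 < z i) ∧ (4 ≤ ∑ i, v i / z i) ∧
        c = ∑ i, (v i ^ 2 / z i + z i - 2 * v i)} (m / 4) ∧
    (0 < m →
      (4 ≤ ∑ _i : Fin 3, m / (3 * m / 4)) ∧
      (∑ _i : Fin 3, (m ^ 2 / (3 * m / 4) + 3 * m / 4 - 2 * m)) = m / 4) := by
  have optimum (hpos : 0 < m) := uniform_point (v := m) (z := 3 * m / 4) (by positivity) (by ring)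
  refine ⟨⟨?_, fun b hb => ?_⟩, fun hpos => ⟨(optimum hpos).1.ge, (optimum hpos).2⟩⟩
  · rintro c ⟨v, z, hv, hz, hsum, rfl⟩
    have := lagrangian_le_sum_cost (a := 1 / 4) hm (by norm_num) (by norm_num) hv hz hsum
    simp only [Fintype.card_fin, Nat.cast_ofNat] at this
    linarith
  rcases hm.eq_or_lt with rfl | hpos
  · have near (s : ℝ) (hs : 0 < s) : b ≤ 4 * s / 3 / 4 :=
      have point := uniform_point (v := 4 * s / 3) hs.ne' (by ring)
      hb ⟨fun _ => 4 * s / 3, fun _ => s, fun _ => by positivity, fun _ => hs,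
        point.1.ge, point.2.symm⟩
    by_contra! hb_pos
    linarith [near b (by linarith)]
  · exact hb ⟨fun _ => m, fun _ => 3 * m / 4, fun _ => le_rfl, fun _ => by positivity,
      (optimum hpos).1.ge, (optimum hpos).2.symm⟩
end

section
/- Let μ ∈ (0,1), p ∈ [0,1], and λ > μ. If real numbers R, Z, C ≥ 0 satisfy R ≤ p·C + (μ/λ)·R and Z = λ(1−p)·C, then R + Z ≤ λ·(p/(λ−μ) + 1 − p)·C. Moreover, for λ = μ + √(μ·p/(1−p)) (with p < 1), the bound λ·(p/(λ−μ) + 1 − p) equals (√p + √(μ(1−p)))². -/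
theorem cost_combination
    (μ p lam : ℝ) (hμ : μ ∈ Set.Ioo (0:ℝ) 1) (hp : p ∈ Set.Icc (0:ℝ) 1)
    (hlam : μ < lam)
    (R Z C : ℝ) (hR : 0 ≤ R) (hZ : 0 ≤ Z) (hC : 0 ≤ C)
    (h1 : R ≤ p * C + (μ / lam) * R) (h2 : Z = lam * (1 - p) * C) :
    R + Z ≤ lam * (p / (lam - μ) + 1 - p) * C ∧
    (p < 1 → lam = μ + Real.sqrt (μ * p / (1 - p)) →
      lam * (p / (lam - μ) + 1 - p)
        = (Real.sqrt p + Real.sqrt (μ * (1 - p))) ^ 2) := by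
  obtain ⟨hμ0, hμ1⟩ := hμ
  obtain ⟨hp0, hp1'⟩ := hp
  have hlam0 : 0 < lam := lt_trans hμ0 hlam
  have hd : 0 < lam - μ := by linarith
  constructor
  · have hcancel : μ / lam * lam = μ := div_mul_cancel₀ _ (ne_of_gt hlam0)
    have key : R * (lam - μ) ≤ lam * p * C := by
      have h := mul_le_mul_of_nonneg_right h1 hlam0.le
      nlinarith [h, hcancel]
    have hRle : R ≤ lam * p * C / (lam - μ) := (le_div_iff₀ hd).mpr key
    have expand : lam * (p / (lam - μ) + 1 - p) * C
        = lam * p * C / (lam - μ) + lam * (1 - p) * C := by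
      field_simp; ring
    rw [h2, expand]
    linarith
  · intro hp1 heq
    have h1p : 0 < 1 - p := by linarith
    have hs0 : 0 ≤ μ * p / (1 - p) := by positivity
    set s := Real.sqrt (μ * p / (1 - p)) with hs
    have hs2 : s ^ 2 = μ * p / (1 - p) := Real.sq_sqrt hs0
    have hs2' : s ^ 2 * (1 - p) = μ * p := by
      rw [hs2]; field_simp
    have hspos : 0 < s := by
      rw [heq] at hlam; linarith
    have ha2 : Real.sqrt p ^ 2 = p := Real.sq_sqrt hp0
    have hb2 : Real.sqrt (μ * (1 - p)) ^ 2 = μ * (1 - p) :=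
      Real.sq_sqrt (by positivity)
    have hab : s * (1 - p) = Real.sqrt p * Real.sqrt (μ * (1 - p)) := by
      rw [← Real.sqrt_mul hp0]
      rw [show p * (μ * (1 - p)) = (μ * p / (1 - p)) * (1 - p) ^ 2 by
        field_simp]
      rw [Real.sqrt_mul hs0, Real.sqrt_sq h1p.le]
    rw [heq, show μ + s - μ = s by ring]
    have hps : p / s * s = p := div_mul_cancel₀ _ hspos.ne'
    have key : (μ + s) * (p / s + 1 - p) * s
        = (Real.sqrt p + Real.sqrt (μ * (1 - p))) ^ 2 * s := by
      linear_combination (μ + s) * hps - s * ha2 - s * hb2 + 2 * s * hab - hs2'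
    exact mul_right_cancel₀ hspos.ne' key
end

section
/- Let S : ℝ≥0 → ℝ≥0 be non-decreasing with S(x) > 0 for x > 0, let λ > 0, and define μ = sup_{y ≥ 0} max_{γ ∈ [0,1]} γ·(1 − S(γy)/S(y)). Then for all x, y, z > 0: (S(y/(λz))·x − S(x/z)·x) / (S(y/(λz))·y) ≤ μ/λ. -/
/-!
Put `u = y / (λ z)` and `w = x / z`. The left side equals `(w / u) (1 - S w / S u) / λ`.
If `w ≤ u`, the factor `(w / u) (1 - S w / S u)` is the term of the supremum defining `μ` at
`y = u`, `γ = w / u`; if `w > u`, monotonicity makes it non-positive, while `μ ≥ 0` (take `γ = 0`).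
-/

open Set

def scaleDeficits (S : ℝ → ℝ) : Set ℝ :=
  {v : ℝ | ∃ y ≥ (0:ℝ), ∃ γ ∈ Icc (0:ℝ) 1, v = γ * (1 - S (γ * y) / S y)}

lemma zero_mem_scaleDeficits (S : ℝ → ℝ) : (0 : ℝ) ∈ scaleDeficits S :=
  ⟨0, le_rfl, 0, ⟨le_rfl, zero_le_one⟩, by ring⟩

lemma bddAbove_scaleDeficits {S : ℝ → ℝ} (hpos : ∀ x : ℝ, 0 < x → 0 < S x) :
    BddAbove (scaleDeficits S) := by
  refine ⟨1, ?_⟩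
  rintro v ⟨y, hy, γ, ⟨hγ0, hγ1⟩, rfl⟩
  rcases hγ0.eq_or_lt with rfl | hγ
  · simp
  have hratio : 0 ≤ S (γ * y) / S y := by
    rcases hy.eq_or_lt with rfl | hy
    · rcases eq_or_ne (S 0) 0 with h0 | h0 <;> simp [h0]
    · exact (div_pos (hpos _ (mul_pos hγ hy)) (hpos y hy)).le
  nlinarith

lemma mul_one_sub_div_le_sSup_scaleDeficits {S : ℝ → ℝ} (hmono : MonotoneOn S (Ici 0))
    (hpos : ∀ x : ℝ, 0 < x → 0 < S x) {u w : ℝ} (hu : 0 < u) (hw : 0 < w) :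
    w / u * (1 - S w / S u) ≤ sSup (scaleDeficits S) := by
  rcases le_or_gt w u with hwu | huw
  · refine le_csSup (bddAbove_scaleDeficits hpos)
      ⟨u, hu.le, w / u, ⟨(div_pos hw hu).le, (div_le_one hu).2 hwu⟩, ?_⟩
    rw [div_mul_cancel₀ w hu.ne']
  · have hS : 1 ≤ S w / S u :=
      (one_le_div (hpos u hu)).2 (hmono hu.le hw.le huw.le)
    calc w / u * (1 - S w / S u) ≤ 0 :=
          mul_nonpos_of_nonneg_of_nonpos (div_pos hw hu).le (by linarith)
      _ ≤ sSup (scaleDeficits S) :=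
          le_csSup (bddAbove_scaleDeficits hpos) (zero_mem_scaleDeficits S)

lemma sub_mul_div_mul_eq {a b x y z lam : ℝ} (ha : a ≠ 0) (hy : y ≠ 0) (hz : z ≠ 0)
    (hlam : lam ≠ 0) :
    (a * x - b * x) / (a * y) = x / z / (y / (lam * z)) * (1 - b / a) / lam := by
  field_simp

theorem per_edge_variational_bound
    (S : ℝ → ℝ)
    (hmono : MonotoneOn S (Ici 0))
    (hpos : ∀ x : ℝ, 0 < x → 0 < S x)
    (lam : ℝ) (hlam : 0 < lam)
    (μ : ℝ)
    (hμ : μ = sSup {v : ℝ | ∃ y ≥ (0:ℝ), ∃ γ ∈ Icc (0:ℝ) 1,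
        v = γ * (1 - S (γ * y) / S y)}) :
    ∀ x > (0:ℝ), ∀ y > (0:ℝ), ∀ z > (0:ℝ),
      (S (y / (lam * z)) * x - S (x / z) * x) / (S (y / (lam * z)) * y)
        ≤ μ / lam := by
  intro x hx y hy z hz
  have hu : 0 < y / (lam * z) := by positivity
  rw [sub_mul_div_mul_eq (hpos _ hu).ne' hy.ne' hz.ne' hlam.ne', hμ]
  exact div_le_div_of_nonneg_right
    (mul_one_sub_div_le_sSup_scaleDeficits hmono hpos hu (div_pos hx hz)) hlam.le
end
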